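/- Let ‖·‖ be a norm on ℝ^d, K : ℝ^d → [0,∞) a symmetric kernel with tail functions κ₁, κ∞ with respect to ‖·‖, X ⊆ ℝ^d compact and connected, and P a λ^d-absolutely continuous probability measure on X that is normal and has a bounded Lebesgue density h. Let ε, δ, σ > 0 and let D = (x₁,…,x_n) ∈ X^n be a data set whose kernel density estimator satisfies sup_{x∈ℝ^d} |h_{D,δ}(x) − h_{P,δ}(x)| < ε. Put ϵ := ‖h‖_∞·κ₁(σ/δ). Then for every ρ ≥ δ^{−d}·κ∞(σ/δ) one has the inclusions M_{ρ+ε+ϵ}^{−2σ} ⊆ L_{D,ρ} ⊆ M_{ρ−ε−ϵ}^{+2σ}, where the enlargements A^{±2σ} are taken inside ℝ^d. -/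

import Mathlib

open MeasureTheory ENNReal

noncomputable section

/-- `N` is a norm on `ℝ^d`. -/
structure IsNormOn (d : ℕ) (N : (Fin d → ℝ) → ℝ) : Prop where
  eq_zero_iff : ∀ x, N x = 0 ↔ x = 0
  smul : ∀ (a : ℝ) (x : Fin d → ℝ), N (a • x) = |a| * N x
  triangle : ∀ x y, N (x + y) ≤ N x + N y

/-- A symmetric kernel on `ℝ^d`: a bounded measurable function `K : ℝ^d → [0,∞)` that is
strictly positive in a neighborhood of `0`, even, and integrates to `1` with respect to
Lebesgue measure. -/
structure IsSymmKernel (d : ℕ) (K : (Fin d → ℝ) → ℝ) : Prop where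
  measurable : Measurable K
  nonneg : ∀ x, 0 ≤ K x
  bddAbove : BddAbove (Set.range K)
  pos_near_zero : ∀ᶠ x in nhds (0 : Fin d → ℝ), 0 < K x
  symm : ∀ x, K (-x) = K x
  integral_one : ∫ x, K x = 1

/-- The tail function `κ₁(r) := ∫_{ℝ^d ∖ B(0,r)} K dλ^d` of a kernel `K`, with respect to
the norm `N`. -/
def kappaOne (d : ℕ) (N K : (Fin d → ℝ) → ℝ) (r : ℝ) : ℝ :=
  ∫ x in {x : Fin d → ℝ | r < N x}, K x

/-- The tail function `κ∞(r) := sup_{x ∈ ℝ^d ∖ B(0,r)} K x` of a kernel `K`, with respect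
to the norm `N`. -/
def kappaInf (d : ℕ) (N K : (Fin d → ℝ) → ℝ) (r : ℝ) : ℝ :=
  sSup (K '' {x : Fin d → ℝ | r < N x})

/-- The infinite-sample kernel density estimator
`h_{P,δ}(x) := δ^{−d} ∫ K((x−y)/δ) dP(y)`. -/
def kdeP (d : ℕ) (K : (Fin d → ℝ) → ℝ) (δ : ℝ) (P : Measure (Fin d → ℝ))
    (x : Fin d → ℝ) : ℝ :=
  (δ ^ d)⁻¹ * ∫ y, K (δ⁻¹ • (x - y)) ∂P

/-- `h` is a Lebesgue density of the measure `P` on `ℝ^d`. -/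
def IsDensityOf (d : ℕ) (P : Measure (Fin d → ℝ)) (h : (Fin d → ℝ) → ℝ) : Prop :=
  Measurable h ∧ (∀ x, 0 ≤ h x) ∧ P = volume.withDensity fun x => ENNReal.ofReal (h x)

/-- `M_ρ`: the support of the measure `A ↦ λ^d(A ∩ {h ≥ ρ})`, i.e. the set of points all
of whose open neighborhoods intersect `{h ≥ ρ}` in a set of positive Lebesgue measure. -/
def Mset (d : ℕ) (h : (Fin d → ℝ) → ℝ) (ρ : ℝ) : Set (Fin d → ℝ) :=
  {x | ∀ U : Set (Fin d → ℝ), IsOpen U → x ∈ U → 0 < volume (U ∩ {y | ρ ≤ h y})}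

/-- `P` (with density `h`) is normal at level `ρ`: there are densities `h₁, h₂` of `P` with
`λ^d(M_ρ ∖ {h₁ ≥ ρ}) = 0` and `λ^d({h₂ > ρ} ∖ int M_ρ) = 0`. -/
def NormalAtLevel (d : ℕ) (P : Measure (Fin d → ℝ)) (h : (Fin d → ℝ) → ℝ) (ρ : ℝ) : Prop :=
  ∃ h₁ h₂, IsDensityOf d P h₁ ∧ IsDensityOf d P h₂ ∧
    volume (Mset d h ρ \ {x | ρ ≤ h₁ x}) = 0 ∧
    volume ({x | ρ < h₂ x} \ interior (Mset d h ρ)) = 0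

/-- The kernel density estimator of a data set `D = (x₁,…,x_n)`:
`h_{D,δ}(x) = (1/(n δ^d)) Σ_{i=1}^n K((x−x_i)/δ)`. -/
def kdeD (d n : ℕ) (K : (Fin d → ℝ) → ℝ) (δ : ℝ) (D : Fin n → Fin d → ℝ)
    (x : Fin d → ℝ) : ℝ :=
  ((n : ℝ) * δ ^ d)⁻¹ * ∑ i, K (δ⁻¹ • (x - D i))

/-- The distance `d(x, A) := inf_{a ∈ A} ‖x − a‖ ∈ [0,∞]` of a point `x` to a set `A`,
taken with respect to the norm `N` (so `d(x, ∅) = ∞`). -/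
def distN (d : ℕ) (N : (Fin d → ℝ) → ℝ) (x : Fin d → ℝ) (A : Set (Fin d → ℝ)) : ℝ≥0∞ :=
  ⨅ a ∈ A, ENNReal.ofReal (N (x - a))

/-- The enlargement `A^{+δ} := {x ∈ ℝ^d : d(x, A) ≤ δ}` (taken inside all of `ℝ^d`). -/
def plusSet (d : ℕ) (N : (Fin d → ℝ) → ℝ) (A : Set (Fin d → ℝ)) (δ : ℝ) :
    Set (Fin d → ℝ) :=
  {x | distN d N x A ≤ ENNReal.ofReal δ}

/-- The erosion `A^{−δ} := ℝ^d ∖ (ℝ^d ∖ A)^{+δ}` (taken inside all of `ℝ^d`). -/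
def minusSet (d : ℕ) (N : (Fin d → ℝ) → ℝ) (A : Set (Fin d → ℝ)) (δ : ℝ) :
    Set (Fin d → ℝ) :=
  (plusSet d N Aᶜ δ)ᶜ

/-- The level set estimator
`L_{D,ρ} := {x ∈ ℝ^d : ∃ i, h_{D,δ}(x_i) ≥ ρ and ‖x − x_i‖ ≤ σ}`. -/
def levelEst (d n : ℕ) (N K : (Fin d → ℝ) → ℝ) (δ σ : ℝ) (D : Fin n → Fin d → ℝ)
    (ρ : ℝ) : Set (Fin d → ℝ) :=
  {x | ∃ i, ρ ≤ kdeD d n K δ D (D i) ∧ N (x - D i) ≤ σ}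

/-!
By the hypothesis on `D`, `h_{D,δ}` is within `ε` of `h_{P,δ}` everywhere, so it suffices to compare
`h_{P,δ}(u)` with the values of `h` on the ball `B(u, σ)`. Splitting `∫ K((u - y)/δ) h(y) dy` into the
ball, which carries kernel mass `δ^d (1 - κ₁(σ/δ))`, and its complement, where `h ≤ ‖h‖_∞`, gives
`θ (1 - κ₁(σ/δ)) ≤ h_{P,δ}(u)` when `h ≥ θ` a.e. on the ball, and `h_{P,δ}(u) ≤ θ + ϵ` when `h ≤ θ` there.

If `x ∈ M_{ρ+ε+ϵ}^{-2σ}`, normality makes `h ≥ ρ + ε + ϵ` a.e. on every `B(u, σ)` with `‖x - u‖ ≤ σ`,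
hence `h_{D,δ} > ρ` on `B(x, σ)`. A sample must lie in `B(x, σ)`, since otherwise
`h_{D,δ}(x) ≤ δ^{-d} κ∞(σ/δ) ≤ ρ`; so `x ∈ L_{D,ρ}`. Conversely, `M_θ` is the support of `λ^d`
restricted to `{h ≥ θ}`, so `h < θ` a.e. off `M_θ`. Hence if a sample `x_i` with `h_{D,δ}(x_i) ≥ ρ`
had no point of `M_{ρ-ε-ϵ}` within `σ`, then `h_{P,δ}(x_i) ≤ ρ - ε`, which is absurd.
-/

open Filter Set

section

variable {d : ℕ}

namespace IsNormOn

variable {N : (Fin d → ℝ) → ℝ} (hN : IsNormOn d N)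
include hN

theorem map_zero : N 0 = 0 := (hN.eq_zero_iff 0).mpr rfl

theorem sub_le_sub_add_sub (x y z : Fin d → ℝ) : N (x - z) ≤ N (x - y) + N (y - z) := by
  simpa only [sub_add_sub_cancel] using hN.triangle (x - y) (y - z)

theorem convexOn : ConvexOn ℝ univ N :=
  ⟨convex_univ, fun x _ y _ a b ha hb _ => by
    simpa only [hN.smul, abs_of_nonneg ha, abs_of_nonneg hb, smul_eq_mul]
      using hN.triangle (a • x) (b • y)⟩

theorem continuous : Continuous N :=
  continuousOn_univ.mp (hN.convexOn.continuousOn isOpen_univ)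

theorem measurableSet_ball (x : Fin d → ℝ) (σ : ℝ) :
    MeasurableSet {y | N (x - y) ≤ σ} :=
  measurableSet_le (hN.continuous.comp (continuous_const.sub continuous_id)).measurable
    measurable_const

theorem div_lt_map_inv_smul_iff {δ : ℝ} (hδ : 0 < δ) (σ : ℝ) (w : Fin d → ℝ) :
    σ / δ < N (δ⁻¹ • w) ↔ σ < N w := by
  rw [hN.smul, abs_of_pos (inv_pos.2 hδ), inv_mul_eq_div, div_lt_div_iff_of_pos_right hδ]

end IsNormOn

theorem mem_plusSet_of_mem {N : (Fin d → ℝ) → ℝ} {A : Set (Fin d → ℝ)} {x a : Fin d → ℝ}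
    {r : ℝ} (ha : a ∈ A) (hxa : N (x - a) ≤ r) : x ∈ plusSet d N A r :=
  (iInf₂_le a ha : distN d N x A ≤ _).trans (ENNReal.ofReal_le_ofReal hxa)

theorem mem_of_mem_minusSet {N : (Fin d → ℝ) → ℝ} {A : Set (Fin d → ℝ)} {x y : Fin d → ℝ}
    {r : ℝ} (hx : x ∈ minusSet d N A r) (hxy : N (x - y) ≤ r) : y ∈ A :=
  not_not.mp fun hy => hx (mem_plusSet_of_mem hy hxy)

theorem integral_comp_inv_smul_sub {δ : ℝ} (hδ : 0 < δ) (x : Fin d → ℝ)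
    (g : (Fin d → ℝ) → ℝ) : ∫ y, g (δ⁻¹ • (x - y)) = δ ^ d * ∫ z, g z := by
  rw [(Measure.measurePreserving_sub_left volume x).integral_comp
      (MeasurableEquiv.subLeft x).measurableEmbedding (fun w => g (δ⁻¹ • w)),
    Measure.integral_comp_smul, Module.finrank_fin_fun, smul_eq_mul, inv_pow, inv_inv,
    abs_of_pos (by positivity)]

theorem setIntegral_compl_ball_comp_inv_smul_sub {N K : (Fin d → ℝ) → ℝ} (hN : IsNormOn d N)
    {δ : ℝ} (hδ : 0 < δ) (x : Fin d → ℝ) (σ : ℝ) :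
    ∫ y in {y | N (x - y) ≤ σ}ᶜ, K (δ⁻¹ • (x - y)) = δ ^ d * kappaOne d N K (σ / δ) := by
  have htail : MeasurableSet {z : Fin d → ℝ | σ / δ < N z} :=
    measurableSet_lt measurable_const hN.continuous.measurable
  have hpre : {y | N (x - y) ≤ σ}ᶜ = (fun y => δ⁻¹ • (x - y)) ⁻¹' {z | σ / δ < N z} := by
    ext y
    simp [hN.div_lt_map_inv_smul_iff hδ]
  rw [← integral_indicator (hN.measurableSet_ball x σ).compl, hpre, kappaOne,
    ← integral_indicator htail, ← integral_comp_inv_smul_sub hδ x]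
  exact integral_congr_ae (ae_of_all _ fun y => indicator_comp_right _)

namespace IsSymmKernel

variable {N K : (Fin d → ℝ) → ℝ} (hK : IsSymmKernel d K)
include hK

theorem integrable : Integrable K :=
  Integrable.of_integral_ne_zero (by rw [hK.integral_one]; exact one_ne_zero)

theorem kappaOne_nonneg (r : ℝ) : 0 ≤ kappaOne d N K r :=
  integral_nonneg hK.nonneg

theorem kappaInf_nonneg (r : ℝ) : 0 ≤ kappaInf d N K r :=
  Real.sSup_nonneg (by rintro _ ⟨z, -, rfl⟩; exact hK.nonneg z)

theorem le_kappaInf {r : ℝ} {z : Fin d → ℝ} (hz : r < N z) : K z ≤ kappaInf d N K r :=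
  le_csSup (hK.bddAbove.mono (image_subset_range _ _)) ⟨z, hz, rfl⟩

variable {δ : ℝ} (hδ : 0 < δ) (x : Fin d → ℝ)
include hδ

theorem integrable_comp_inv_smul_sub : Integrable fun y => K (δ⁻¹ • (x - y)) :=
  ((Measure.measurePreserving_sub_left volume x).integrable_comp_emb
    (MeasurableEquiv.subLeft x).measurableEmbedding).2
    (hK.integrable.comp_smul (inv_ne_zero hδ.ne'))

theorem setIntegral_ball_comp_inv_smul_sub (hN : IsNormOn d N) (σ : ℝ) :
    ∫ y in {y | N (x - y) ≤ σ}, K (δ⁻¹ • (x - y)) = δ ^ d * (1 - kappaOne d N K (σ / δ)) := by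
  have hsplit := integral_add_compl (hN.measurableSet_ball x σ)
    (hK.integrable_comp_inv_smul_sub hδ x)
  rw [setIntegral_compl_ball_comp_inv_smul_sub hN hδ x, integral_comp_inv_smul_sub hδ x,
    hK.integral_one] at hsplit
  linarith

end IsSymmKernel

theorem kdeD_le_kappaInf_of_forall_lt {n : ℕ} {N K : (Fin d → ℝ) → ℝ} (hN : IsNormOn d N)
    (hK : IsSymmKernel d K) {δ σ : ℝ} (hδ : 0 < δ) (D : Fin n → Fin d → ℝ)
    {x : Fin d → ℝ} (hfar : ∀ i, σ < N (x - D i)) :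
    kdeD d n K δ D x ≤ (δ ^ d)⁻¹ * kappaInf d N K (σ / δ) := by
  have hsum : ∑ i, K (δ⁻¹ • (x - D i)) ≤ n * kappaInf d N K (σ / δ) := by
    simpa using Finset.sum_le_sum (s := Finset.univ) fun i _ =>
      hK.le_kappaInf ((hN.div_lt_map_inv_smul_iff hδ σ _).2 (hfar i))
  rcases n.eq_zero_or_pos with rfl | hn
  · simpa [kdeD] using mul_nonneg (inv_nonneg.2 (pow_pos hδ d).le) (hK.kappaInf_nonneg _)
  · calc kdeD d n K δ D x ≤ ((n : ℝ) * δ ^ d)⁻¹ * (n * kappaInf d N K (σ / δ)) :=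
          mul_le_mul_of_nonneg_left hsum (by positivity)
      _ = (δ ^ d)⁻¹ * kappaInf d N K (σ / δ) := by field_simp

theorem setIntegral_mul_le_of_ae_le {α : Type*} [MeasurableSpace α] {μ : Measure α}
    {w g : α → ℝ} {t : Set α} {c : ℝ} (hw : ∀ y, 0 ≤ w y) (hw_int : Integrable w μ)
    (hwg : Integrable (fun y => w y * g y) μ) (hg : ∀ᵐ y ∂μ.restrict t, g y ≤ c) :
    ∫ y in t, w y * g y ∂μ ≤ c * ∫ y in t, w y ∂μ := by
  rw [← integral_const_mul]
  refine setIntegral_mono_ae_restrict hwg.integrableOn (hw_int.const_mul c).integrableOn ?_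
  filter_upwards [hg] with y hy
  simpa only [mul_comm c] using mul_le_mul_of_nonneg_left hy (hw y)

theorem mul_setIntegral_le_of_ae_le {α : Type*} [MeasurableSpace α] {μ : Measure α}
    {w g : α → ℝ} {t : Set α} {c : ℝ} (hw : ∀ y, 0 ≤ w y) (hw_int : Integrable w μ)
    (hwg : Integrable (fun y => w y * g y) μ) (hg : ∀ᵐ y ∂μ.restrict t, c ≤ g y) :
    c * ∫ y in t, w y ∂μ ≤ ∫ y in t, w y * g y ∂μ := by
  rw [← integral_const_mul]
  refine setIntegral_mono_ae_restrict (hw_int.const_mul c).integrableOn hwg.integrableOn ?_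
  filter_upwards [hg] with y hy
  simpa only [mul_comm c] using mul_le_mul_of_nonneg_left hy (hw y)

namespace IsDensityOf

variable {P : Measure (Fin d → ℝ)} {h : (Fin d → ℝ) → ℝ} (hdens : IsDensityOf d P h)
include hdens

theorem integrable [IsFiniteMeasure P] : Integrable h := by
  refine ⟨hdens.1.aestronglyMeasurable,
    (hasFiniteIntegral_iff_ofReal (ae_of_all _ hdens.2.1)).2 ?_⟩
  rw [← setLIntegral_univ, ← withDensity_apply _ MeasurableSet.univ, ← hdens.2.2]
  exact measure_lt_top P univ

theorem ae_eq {h' : (Fin d → ℝ) → ℝ} (hdens' : IsDensityOf d P h') : h =ᵐ[volume] h' := by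
  have hae := (withDensity_eq_iff_of_sigmaFinite
    (ENNReal.measurable_ofReal.comp hdens.1).aemeasurable
    (ENNReal.measurable_ofReal.comp hdens'.1).aemeasurable).1 (hdens.2.2.symm.trans hdens'.2.2)
  filter_upwards [hae] with y hy
  exact (ENNReal.ofReal_eq_ofReal_iff (hdens.2.1 y) (hdens'.2.1 y)).1 hy

theorem integral_eq (g : (Fin d → ℝ) → ℝ) : ∫ y, g y ∂P = ∫ y, g y * h y := by
  rw [hdens.2.2, integral_withDensity_eq_integral_toReal_smul
    (f := fun y => ENNReal.ofReal (h y)) (ENNReal.measurable_ofReal.comp hdens.1)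
    (ae_of_all _ fun _ => ENNReal.ofReal_lt_top)]
  simp_rw [ENNReal.toReal_ofReal (hdens.2.1 _), smul_eq_mul, mul_comm]

variable [IsFiniteMeasure P] {N K : (Fin d → ℝ) → ℝ} (hN : IsNormOn d N)
  (hK : IsSymmKernel d K) {δ : ℝ} (hδ : 0 < δ) {x : Fin d → ℝ} {σ θ : ℝ}
include hK

theorem integrable_kernel_mul : Integrable fun y => K (δ⁻¹ • (x - y)) * h y := by
  obtain ⟨C, hC⟩ := hK.bddAbove
  refine hdens.integrable.bdd_mul (c := C)
    (hK.measurable.comp ((measurable_const.sub measurable_id).const_smul δ⁻¹)).aestronglyMeasurable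
    (ae_of_all _ fun y => ?_)
  rw [Real.norm_eq_abs, abs_of_nonneg (hK.nonneg _)]
  exact hC (mem_range_self _)

include hN hδ

theorem kdeP_le_of_ae_le_on_ball {M : ℝ} (hθ : 0 ≤ θ) (hM : ∀ᵐ y, h y ≤ M)
    (hball : ∀ᵐ y, N (x - y) ≤ σ → h y ≤ θ) :
    kdeP d K δ P x ≤ θ + M * kappaOne d N K (σ / δ) := by
  have hs := hN.measurableSet_ball x σ
  have hKh := hdens.integrable_kernel_mul hK (δ := δ) (x := x)
  have hKint := hK.integrable_comp_inv_smul_sub hδ x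
  have hin := setIntegral_mul_le_of_ae_le (fun _ => hK.nonneg _) hKint hKh
    ((ae_restrict_iff' hs).2 hball)
  have hout := setIntegral_mul_le_of_ae_le (t := {y | N (x - y) ≤ σ}ᶜ)
    (fun _ => hK.nonneg _) hKint hKh (ae_restrict_of_ae hM)
  rw [hK.setIntegral_ball_comp_inv_smul_sub hδ x hN] at hin
  rw [setIntegral_compl_ball_comp_inv_smul_sub hN hδ x] at hout
  have hκ : 0 ≤ kappaOne d N K (σ / δ) := hK.kappaOne_nonneg _
  rw [kdeP, hdens.integral_eq, ← integral_add_compl hs hKh, inv_mul_le_iff₀ (by positivity)]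
  linarith [mul_nonneg (mul_nonneg hθ (pow_pos hδ d).le) hκ]

theorem mul_one_sub_kappaOne_le_kdeP (hball : ∀ᵐ y, N (x - y) ≤ σ → θ ≤ h y) :
    θ * (1 - kappaOne d N K (σ / δ)) ≤ kdeP d K δ P x := by
  have hs := hN.measurableSet_ball x σ
  have hKh := hdens.integrable_kernel_mul hK (δ := δ) (x := x)
  have hin := mul_setIntegral_le_of_ae_le (fun _ => hK.nonneg _)
    (hK.integrable_comp_inv_smul_sub hδ x) hKh ((ae_restrict_iff' hs).2 hball)
  rw [hK.setIntegral_ball_comp_inv_smul_sub hδ x hN] at hin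
  have hout : 0 ≤ ∫ y in {y | N (x - y) ≤ σ}ᶜ, K (δ⁻¹ • (x - y)) * h y :=
    setIntegral_nonneg hs.compl fun y _ => mul_nonneg (hK.nonneg _) (hdens.2.1 y)
  rw [kdeP, hdens.integral_eq, ← integral_add_compl hs hKh, le_inv_mul_iff₀ (by positivity)]
  linarith

end IsDensityOf

section Mset

variable {h : (Fin d → ℝ) → ℝ} {θ : ℝ}

theorem Mset_eq_support (h : (Fin d → ℝ) → ℝ) (θ : ℝ) :
    Mset d h θ = (volume.restrict {y | θ ≤ h y}).support := by
  ext x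
  simp only [Mset, Measure.support_eq_forall_isOpen, mem_ofPred_eq]
  exact forall_congr' fun U => ⟨fun H hxU hU => by
    rw [Measure.restrict_apply hU.measurableSet]; exact H hU hxU, fun H hU hxU => by
    rw [← Measure.restrict_apply hU.measurableSet]; exact H hxU hU⟩

theorem ae_mem_Mset_of_le (h : (Fin d → ℝ) → ℝ) (θ : ℝ) :
    ∀ᵐ y, θ ≤ h y → y ∈ Mset d h θ := by
  rw [Mset_eq_support]
  exact (ae_restrict_iff Measure.isClosed_support.measurableSet).1 Measure.support_mem_ae

theorem Mset_eq_univ_of_nonpos (hh : ∀ y, 0 ≤ h y) (hθ : θ ≤ 0) : Mset d h θ = univ := by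
  have hall : {y | θ ≤ h y} = univ := eq_univ_of_forall fun y => hθ.trans (hh y)
  rw [Mset_eq_support, hall, Measure.restrict_univ, Measure.support_eq_univ]

theorem le_of_mem_Mset {M : ℝ} {x : Fin d → ℝ} (hM : ∀ᵐ y, h y ≤ M) (hx : x ∈ Mset d h θ) :
    θ ≤ M := by
  by_contra! hMθ
  have hpos := hx univ isOpen_univ trivial
  rw [univ_inter] at hpos
  refine hpos.ne' (measure_mono_null (fun y hy => ?_) (ae_iff.1 hM))
  exact not_le.2 (hMθ.trans_le hy)

theorem NormalAtLevel.ae_le_of_mem_Mset {P : Measure (Fin d → ℝ)}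
    (hnormal : NormalAtLevel d P h θ) (hdens : IsDensityOf d P h) :
    ∀ᵐ y, y ∈ Mset d h θ → θ ≤ h y := by
  obtain ⟨h₁, -, hdens₁, -, hnull, -⟩ := hnormal
  filter_upwards [hdens.ae_eq hdens₁, measure_eq_zero_iff_ae_notMem.1 hnull] with y hy hy₁ hyM
  rw [hy]
  by_contra hlt
  exact hy₁ ⟨hyM, hlt⟩

end Mset

section LevelSetInclusions

variable {n : ℕ} {N K : (Fin d → ℝ) → ℝ} {P : Measure (Fin d → ℝ)} [IsFiniteMeasure P]
  {h : (Fin d → ℝ) → ℝ} {D : Fin n → Fin d → ℝ} {M ε δ σ ρ : ℝ}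
  (hN : IsNormOn d N) (hK : IsSymmKernel d K) (hdens : IsDensityOf d P h)
  (hM : ∀ᵐ y, h y ≤ M) (hδ : 0 < δ) (hσ : 0 ≤ σ)
  (happrox : ∀ x, |kdeD d n K δ D x - kdeP d K δ P x| < ε)
include hN hK hdens hM hδ hσ happrox

theorem minusSet_subset_levelEst (hρ : (δ ^ d)⁻¹ * kappaInf d N K (σ / δ) ≤ ρ)
    (hnormal : NormalAtLevel d P h (ρ + ε + M * kappaOne d N K (σ / δ))) :
    minusSet d N (Mset d h (ρ + ε + M * kappaOne d N K (σ / δ))) (2 * σ) ⊆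
      levelEst d n N K δ σ D ρ := by
  set θ := ρ + ε + M * kappaOne d N K (σ / δ)
  intro x hx
  have hself : N (x - x) ≤ σ := by rw [sub_self, hN.map_zero]; exact hσ
  have hθM : θ ≤ M := le_of_mem_Mset hM (mem_of_mem_minusSet hx (by linarith))
  have hkdeD : ∀ u, N (x - u) ≤ σ → ρ < kdeD d n K δ D u := by
    intro u hu
    have hball : ∀ᵐ y, N (u - y) ≤ σ → θ ≤ h y := by
      filter_upwards [hnormal.ae_le_of_mem_Mset hdens] with y hy hyu
      exact hy (mem_of_mem_minusSet hx (by linarith [hN.sub_le_sub_add_sub x u y]))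
    have hlow := hdens.mul_one_sub_kappaOne_le_kdeP hN hK hδ hball
    have hκ : 0 ≤ kappaOne d N K (σ / δ) := hK.kappaOne_nonneg _
    linarith [mul_le_mul_of_nonneg_right hθM hκ, abs_lt.1 (happrox u)]
  obtain ⟨i, hi⟩ : ∃ i, N (x - D i) ≤ σ := by
    by_contra! hfar
    linarith [kdeD_le_kappaInf_of_forall_lt hN hK hδ D hfar, hkdeD x hself]
  exact ⟨i, (hkdeD (D i) hi).le, hi⟩

theorem levelEst_subset_plusSet :
    levelEst d n N K δ σ D ρ ⊆
      plusSet d N (Mset d h (ρ - ε - M * kappaOne d N K (σ / δ))) (2 * σ) := by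
  set θ := ρ - ε - M * kappaOne d N K (σ / δ)
  rintro x ⟨i, hρi, hxi⟩
  suffices ∃ a ∈ Mset d h θ, N (D i - a) ≤ σ by
    obtain ⟨a, ha, hia⟩ := this
    exact mem_plusSet_of_mem ha (by linarith [hN.sub_le_sub_add_sub x (D i) a])
  by_contra! hfar
  have hθ : 0 < θ := by
    by_contra! hθ
    have := hfar (D i) (by rw [Mset_eq_univ_of_nonpos hdens.2.1 hθ]; trivial)
    rw [sub_self, hN.map_zero] at this
    linarith
  have hball : ∀ᵐ y, N (D i - y) ≤ σ → h y ≤ θ := by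
    filter_upwards [ae_mem_Mset_of_le h θ] with y hy hyi
    by_contra! hlt
    exact (hfar y (hy hlt.le)).not_ge hyi
  linarith [hdens.kdeP_le_of_ae_le_on_ball hN hK hδ hθ.le hM hball, abs_lt.1 (happrox (D i))]

end LevelSetInclusions

end

theorem levelEst_uncertainty_control_bounded_general {d n : ℕ}
    (N : (Fin d → ℝ) → ℝ) (hN : IsNormOn d N)
    (K : (Fin d → ℝ) → ℝ) (hK : IsSymmKernel d K)
    (P : Measure (Fin d → ℝ)) [IsProbabilityMeasure P]
    (h : (Fin d → ℝ) → ℝ) (hdens : IsDensityOf d P h)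
    (hbdd : ∃ C : ℝ, ∀ᵐ x ∂(volume : Measure (Fin d → ℝ)), h x ≤ C)
    (hnormal : ∀ ρ : ℝ, 0 ≤ ρ → NormalAtLevel d P h ρ)
    (ε δ σ : ℝ) (hε : 0 < ε) (hδ : 0 < δ) (hσ : 0 < σ)
    (D : Fin n → Fin d → ℝ)
    (happrox : (⨆ x : Fin d → ℝ, ENNReal.ofReal |kdeD d n K δ D x - kdeP d K δ P x|) <
      ENNReal.ofReal ε)
    (ρ : ℝ) (hρ : (δ ^ d)⁻¹ * kappaInf d N K (σ / δ) ≤ ρ) :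
    minusSet d N
        (Mset d h (ρ + ε + essSup h volume * kappaOne d N K (σ / δ))) (2 * σ) ⊆
      levelEst d n N K δ σ D ρ ∧
    levelEst d n N K δ σ D ρ ⊆
      plusSet d N
        (Mset d h (ρ - ε - essSup h volume * kappaOne d N K (σ / δ))) (2 * σ) := by
  obtain ⟨C, hC⟩ := hbdd
  have hM : ∀ᵐ y, h y ≤ essSup h volume := ae_le_essSup ⟨C, eventually_map.2 hC⟩
  have hM₀ : 0 ≤ essSup h volume := hM.exists.elim fun y hy => (hdens.2.1 y).trans hy
  have hclose : ∀ x, |kdeD d n K δ D x - kdeP d K δ P x| < ε := fun x =>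
    (ENNReal.ofReal_lt_ofReal_iff hε).1 <| (le_iSup (fun y =>
      ENNReal.ofReal |kdeD d n K δ D y - kdeP d K δ P y|) x).trans_lt happrox
  have hρ₀ : 0 ≤ ρ :=
    (mul_nonneg (inv_nonneg.2 (pow_pos hδ d).le) (hK.kappaInf_nonneg _)).trans hρ
  have hlevel : 0 ≤ ρ + ε + essSup h volume * kappaOne d N K (σ / δ) := by
    have := hK.kappaOne_nonneg (N := N) (σ / δ)
    positivity
  exact ⟨minusSet_subset_levelEst hN hK hdens hM hδ hσ.le hclose hρ (hnormal _ hlevel),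
    levelEst_subset_plusSet hN hK hdens hM hδ hσ.le hclose⟩

/-- (Uncertainty control for KDE level sets, bounded-density version.)
Let `‖·‖` be a norm on `ℝ^d`, `K` a symmetric kernel with tail function `κ₁`, `X ⊆ ℝ^d`
compact and connected, and `P` a Lebesgue-absolutely continuous probability measure on `X`
that is normal and has a bounded Lebesgue density `h`.  Let `ε, δ, σ > 0` and let
`D ∈ X^n` satisfy `sup_{x∈ℝ^d} |h_{D,δ}(x) − h_{P,δ}(x)| < ε`.  Put
`ϵ := ‖h‖_∞·κ₁(σ/δ)`.  Then for every `ρ ≥ δ^{−d}·κ∞(σ/δ)` one has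
`M_{ρ+ε+ϵ}^{−2σ} ⊆ L_{D,ρ} ⊆ M_{ρ−ε−ϵ}^{+2σ}`, the enlargements taken in `ℝ^d`. -/
theorem levelEst_uncertainty_control_bounded {d n : ℕ} (hd : 0 < d)
    (N : (Fin d → ℝ) → ℝ) (hN : IsNormOn d N)
    (K : (Fin d → ℝ) → ℝ) (hK : IsSymmKernel d K)
    (X : Set (Fin d → ℝ)) (hXcompact : IsCompact X) (hXconn : IsConnected X)
    (P : Measure (Fin d → ℝ)) [IsProbabilityMeasure P] (hPX : P Xᶜ = 0)
    (h : (Fin d → ℝ) → ℝ) (hdens : IsDensityOf d P h)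
    (hbdd : ∃ C : ℝ, ∀ᵐ x ∂(volume : Measure (Fin d → ℝ)), h x ≤ C)
    (hnormal : ∀ ρ : ℝ, 0 ≤ ρ → NormalAtLevel d P h ρ)
    (ε δ σ : ℝ) (hε : 0 < ε) (hδ : 0 < δ) (hσ : 0 < σ)
    (D : Fin n → Fin d → ℝ) (hD : ∀ i, D i ∈ X)
    (happrox : (⨆ x : Fin d → ℝ, ENNReal.ofReal |kdeD d n K δ D x - kdeP d K δ P x|) <
      ENNReal.ofReal ε)
    (ρ : ℝ) (hρ : (δ ^ d)⁻¹ * kappaInf d N K (σ / δ) ≤ ρ) :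
    minusSet d N
        (Mset d h (ρ + ε + essSup h volume * kappaOne d N K (σ / δ))) (2 * σ) ⊆
      levelEst d n N K δ σ D ρ ∧
    levelEst d n N K δ σ D ρ ⊆
      plusSet d N
        (Mset d h (ρ - ε - essSup h volume * kappaOne d N K (σ / δ))) (2 * σ) :=
  levelEst_uncertainty_control_bounded_general N hN K hK P h hdens hbdd hnormal ε δ σ hε hδ hσ D
    happrox ρ hρ
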